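/- arXiv:2002.11512 — 4 statements merged into one kernel-verified Lean document; each statement's English description precedes it below -/
import Mathlib

section
/- For every infinite-dimensional separable real Banach space B there exist a separable real Hilbert space H and a continuous injective linear map j : B → H whose range is dense in H (so that B embeds in H as a continuous dense subspace). -/
/-!
Choose a dense sequence `(uₙ)` in `B` and functionals `fₙ` with `‖fₙ‖ ≤ 1` and `fₙ uₙ = ‖uₙ‖`.
If `fₙ x = 0` for all `n`, then `‖uₙ‖ = |fₙ (uₙ - x)| ≤ ‖uₙ - x‖`, so `‖x‖ ≤ 2 ‖x - uₙ‖` for every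
`n`, and density forces `x = 0`. Thus `x ↦ (2⁻ⁿ fₙ x)ₙ` is a bounded injective operator into
`ℓ²(ℕ)`, and it has dense range in the closure `H` of its range, a closed subspace of `ℓ²`.
-/

open TopologicalSpace

section Separating

variable (𝕜 : Type*) {E : Type*} [RCLike 𝕜] [NormedAddCommGroup E] [NormedSpace 𝕜 E]
  [SeparableSpace E]

theorem exists_seq_strongDual_norm_le_one_separating :
    ∃ f : ℕ → StrongDual 𝕜 E, (∀ n, ‖f n‖ ≤ 1) ∧ ∀ x, (∀ n, f n x = 0) → x = 0 := by
  obtain ⟨u, hu⟩ := exists_dense_seq E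
  choose f hf_norm hf_eval using fun n => exists_dual_vector'' 𝕜 (u n)
  refine ⟨f, hf_norm, fun x hx => ?_⟩
  have hnorm_le : ∀ n, ‖x‖ ≤ 2 * dist x (u n) := by
    intro n
    have hun : ‖u n‖ ≤ dist x (u n) :=
      calc ‖u n‖ = ‖f n (u n - x)‖ := by simp [hf_eval, hx n]
        _ ≤ ‖u n - x‖ := by simpa using (f n).le_of_opNorm_le (hf_norm n) (u n - x)
        _ = dist x (u n) := by rw [dist_eq_norm']
    linarith [norm_le_norm_add_norm_sub' x (u n), dist_eq_norm x (u n)]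
  have hclosed : IsClosed {y | ‖x‖ ≤ 2 * dist x y} := isClosed_le continuous_const (by fun_prop)
  simpa using hclosed.closure_subset_iff.mpr (Set.range_subset_iff.mpr hnorm_le) (hu x)

theorem exists_seq_strongDual_separating_summable_sq_norm :
    ∃ f : ℕ → StrongDual 𝕜 E, Summable (fun n => ‖f n‖ ^ 2) ∧
      ∀ x, (∀ n, f n x = 0) → x = 0 := by
  obtain ⟨f, hf_norm, hf_sep⟩ := exists_seq_strongDual_norm_le_one_separating 𝕜 (E := E)
  refine ⟨fun n => (2⁻¹ : 𝕜) ^ n • f n, ?_, fun x hx => hf_sep x fun n => ?_⟩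
  · refine Summable.of_nonneg_of_le (fun n => by positivity) (fun n => ?_)
      (summable_geometric_of_lt_one (r := 4⁻¹) (by norm_num) (by norm_num))
    calc ‖(2⁻¹ : 𝕜) ^ n • f n‖ ^ 2 = ((2 : ℝ)⁻¹ ^ n) ^ 2 * ‖f n‖ ^ 2 := by
          simp [norm_smul, mul_pow]
      _ ≤ ((2 : ℝ)⁻¹ ^ n) ^ 2 * 1 := by gcongr; exact pow_le_one₀ (norm_nonneg _) (hf_norm n)
      _ = 4⁻¹ ^ n := by rw [mul_one, ← pow_mul, mul_comm, pow_mul]; norm_num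
  · simpa using hx n

end Separating

section ToLpTwo

variable {ι 𝕜 E : Type*} [RCLike 𝕜] [NormedAddCommGroup E] [NormedSpace 𝕜 E]
  {f : ι → StrongDual 𝕜 E}

theorem sq_norm_apply_le (g : StrongDual 𝕜 E) (x : E) : ‖g x‖ ^ 2 ≤ ‖g‖ ^ 2 * ‖x‖ ^ 2 := by
  simpa [mul_pow] using pow_le_pow_left₀ (norm_nonneg _) (g.le_opNorm x) 2

theorem summable_sq_norm_apply (hf : Summable fun i => ‖f i‖ ^ 2) (x : E) :
    Summable fun i => ‖f i x‖ ^ 2 :=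
  Summable.of_nonneg_of_le (fun i => by positivity) (fun i => sq_norm_apply_le (f i) x)
    (hf.mul_right (‖x‖ ^ 2))

theorem memℓp_two_apply_of_summable_sq_norm (hf : Summable fun i => ‖f i‖ ^ 2) (x : E) :
    Memℓp (fun i => f i x) 2 :=
  memℓp_gen (by simpa using summable_sq_norm_apply hf x)

noncomputable def toLpTwo (f : ι → StrongDual 𝕜 E) (hf : Summable fun i => ‖f i‖ ^ 2) :
    E →L[𝕜] lp (fun _ : ι => 𝕜) 2 :=
  LinearMap.mkContinuous
    { toFun := fun x => ⟨fun i => f i x, memℓp_two_apply_of_summable_sq_norm hf x⟩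
      map_add' := fun x y => by ext i; exact map_add (f i) x y
      map_smul' := fun c x => by ext i; simp }
    (√(∑' i, ‖f i‖ ^ 2)) fun x => by
      refine lp.norm_le_of_tsum_le (by norm_num) (by positivity) ?_
      simp only [ENNReal.toReal_ofNat, Real.rpow_two, mul_pow,
        Real.sq_sqrt (tsum_nonneg fun i => sq_nonneg ‖f i‖), ← tsum_mul_right]
      exact (summable_sq_norm_apply hf x).tsum_le_tsum (fun i => sq_norm_apply_le (f i) x)
        (hf.mul_right _)

theorem toLpTwo_injective (hf : Summable fun i => ‖f i‖ ^ 2)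
    (hsep : ∀ x, (∀ i, f i x = 0) → x = 0) : Function.Injective (toLpTwo f hf) :=
  (injective_iff_map_eq_zero _).mpr fun x hx => hsep x fun i => congr($hx i)

end ToLpTwo

theorem ContinuousLinearMap.denseRange_codRestrict_topologicalClosure_range
    {R M N : Type*} [Semiring R] [TopologicalSpace M] [AddCommMonoid M] [Module R M]
    [TopologicalSpace N] [AddCommMonoid N] [Module R N] [ContinuousAdd N]
    [ContinuousConstSMul R N] (T : M →L[R] N) :
    DenseRange (T.codRestrict (LinearMap.range (T : M →ₗ[R] N)).topologicalClosure
      fun x => Submodule.le_topologicalClosure _ (LinearMap.mem_range_self _ x)) := by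
  rw [DenseRange, Subtype.dense_iff, ← Set.range_comp]
  exact fun y hy => hy

theorem kuelbs_lemma_general (B : Type) [NormedAddCommGroup B] [NormedSpace ℝ B]
    [TopologicalSpace.SeparableSpace B] :
    ∃ (H : Type) (_ : NormedAddCommGroup H) (_ : InnerProductSpace ℝ H),
      CompleteSpace H ∧ TopologicalSpace.SeparableSpace H ∧
        ∃ j : B →L[ℝ] H, Function.Injective j ∧ DenseRange j := by
  obtain ⟨f, hf, hsep⟩ := exists_seq_strongDual_separating_summable_sq_norm ℝ (E := B)
  have hdense := (toLpTwo f hf).denseRange_codRestrict_topologicalClosure_range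
  refine ⟨_, inferInstance, inferInstance, inferInstance, hdense.separableSpace (map_continuous _),
    _, fun x y hxy => toLpTwo_injective hf hsep (congr_arg Subtype.val hxy), hdense⟩

/-- **Kuelbs' Lemma.** Every infinite-dimensional separable real Banach space `B`
embeds into some separable real Hilbert space `H` as a continuous dense subspace,
i.e. there is a bounded injective linear operator `j : B → H` with dense range. -/
theorem kuelbs_lemma (B : Type) [NormedAddCommGroup B] [NormedSpace ℝ B]
    [CompleteSpace B] [TopologicalSpace.SeparableSpace B]
    (hinf : ¬ FiniteDimensional ℝ B) :
    ∃ (H : Type) (_ : NormedAddCommGroup H) (_ : InnerProductSpace ℝ H),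
      CompleteSpace H ∧ TopologicalSpace.SeparableSpace H ∧
        ∃ j : B →L[ℝ] H, Function.Injective j ∧ DenseRange j :=
  kuelbs_lemma_general B
end

section
/- With 1 ≤ q < ∞, under the stated hypotheses on (𝓔_k) and (t_k), every f ∈ L^q(μ) satisfies the Kuelbs–Steadman K² bound (∑_{k=1}^∞ t_k |∫_X 𝓔_k f dμ|²)^{1/2} ≤ ‖f‖_{L^q(μ)}. In particular L^q(μ) embeds continuously into the K² space (Theorem 2.5). -/
/-!
Since `0 ≤ 𝓔ₖ ≤ 1` and `∫ 𝓔ₖ ≤ 1`, the `L¹` and `L^∞` norms of `𝓔ₖ` are at most one, hence so is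
its `L^p` norm for the exponent `p` conjugate to `q`. Hölder's inequality then gives
`|∫ 𝓔ₖ f| ≤ ‖f‖_q` for every `k`, and the `K²` norm is a `t`-weighted mean of these bounds,
with weights summing to one.
-/

open MeasureTheory
open scoped ENNReal

section Lebesgue

variable {α : Type*} [MeasurableSpace α] {μ : Measure α}

theorem eLpNorm_le_one_of_eLpNorm_one_le_one_of_eLpNorm_top_le_one {ε : Type*} [ENorm ε]
    {g : α → ε} {p : ℝ≥0∞} (hp : 1 ≤ p) (h1 : eLpNorm g 1 μ ≤ 1) (htop : eLpNorm g ∞ μ ≤ 1) :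
    eLpNorm g p μ ≤ 1 := by
  rcases eq_or_ne p ∞ with rfl | hp_top
  · exact htop
  have hp_real : 1 ≤ p.toReal := ENNReal.toReal_mono hp_top hp
  rw [eLpNorm_exponent_top] at htop
  have hg_le : ∀ᵐ x ∂μ, ‖g x‖ₑ ≤ 1 :=
    (enorm_ae_le_eLpNormEssSup g μ).mono fun x hx => hx.trans htop
  rw [eLpNorm_eq_lintegral_rpow_enorm_toReal (zero_lt_one.trans_le hp).ne' hp_top]
  refine ENNReal.rpow_le_one ?_ (by positivity)
  calc ∫⁻ x, ‖g x‖ₑ ^ p.toReal ∂μ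
      ≤ ∫⁻ x, ‖g x‖ₑ ∂μ :=
        lintegral_mono_ae (hg_le.mono fun x hx => ENNReal.rpow_le_self_of_le_one hx hp_real)
    _ = eLpNorm g 1 μ := eLpNorm_one_eq_lintegral_enorm.symm
    _ ≤ 1 := h1

theorem eLpNorm_le_one_of_integral_le_one {g : α → ℝ} {p : ℝ≥0∞} (hp : 1 ≤ p)
    (hg0 : 0 ≤ᵐ[μ] g) (hg1 : ∀ᵐ x ∂μ, g x ≤ 1) (hgi : Integrable g μ) (hint : ∫ x, g x ∂μ ≤ 1) :
    eLpNorm g p μ ≤ 1 := by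
  refine eLpNorm_le_one_of_eLpNorm_one_le_one_of_eLpNorm_top_le_one hp ?_ ?_
  · rw [eLpNorm_one_eq_lintegral_enorm, lintegral_enorm_of_ae_nonneg hg0,
      ← ofReal_integral_eq_lintegral_ofReal hgi hg0]
    exact ENNReal.ofReal_le_one.mpr hint
  · rw [eLpNorm_exponent_top]
    refine eLpNormEssSup_le_of_ae_enorm_bound ?_
    filter_upwards [hg0, hg1] with x hx0 hx1
    rw [Real.enorm_of_nonneg hx0]
    exact ENNReal.ofReal_le_one.mpr hx1

theorem enorm_integral_mul_le_eLpNorm_mul_eLpNorm {𝕜 : Type*} [RCLike 𝕜] {p q : ℝ≥0∞}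
    [p.HolderConjugate q] {φ f : α → 𝕜} (hφ : AEStronglyMeasurable φ μ)
    (hf : AEStronglyMeasurable f μ) :
    ‖∫ x, φ x * f x ∂μ‖ₑ ≤ eLpNorm φ p μ * eLpNorm f q μ :=
  calc ‖∫ x, φ x * f x ∂μ‖ₑ ≤ eLpNorm (φ • f) 1 μ :=
        (enorm_integral_le_lintegral_enorm _).trans_eq eLpNorm_one_eq_lintegral_enorm.symm
    _ ≤ eLpNorm φ p μ * eLpNorm f q μ := eLpNorm_smul_le_mul_eLpNorm hf hφ

end Lebesgue

theorem tsum_mul_rpow_one_div_le {ι : Type*} {t a : ι → ℝ} {M r : ℝ} (ht0 : ∀ k, 0 ≤ t k)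
    (ht : ∑' k, t k = 1) (ha0 : ∀ k, 0 ≤ a k) (haM : ∀ k, a k ≤ M) (hr : 0 < r) :
    (∑' k, t k * a k ^ r) ^ (1 / r) ≤ M := by
  have ht_summable : Summable t := by
    by_contra h
    simp [tsum_eq_zero_of_not_summable h] at ht
  have hM : 0 ≤ M := by
    by_contra! hM
    have : IsEmpty ι := ⟨fun k => by linarith [ha0 k, haM k]⟩
    simp at ht
  have hterm : ∀ k, t k * a k ^ r ≤ t k * M ^ r := fun k =>
    mul_le_mul_of_nonneg_left (Real.rpow_le_rpow (ha0 k) (haM k) hr.le) (ht0 k)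
  have hsum_le : ∑' k, t k * a k ^ r ≤ M ^ r :=
    calc ∑' k, t k * a k ^ r ≤ ∑' k, t k * M ^ r :=
          Summable.tsum_le_tsum hterm
            ((ht_summable.mul_right _).of_nonneg_of_le
              (fun k => mul_nonneg (ht0 k) (Real.rpow_nonneg (ha0 k) r)) hterm)
            (ht_summable.mul_right _)
      _ = M ^ r := by rw [tsum_mul_right, ht, one_mul]
  rw [one_div, Real.rpow_inv_le_iff_of_pos
    (tsum_nonneg fun k => mul_nonneg (ht0 k) (Real.rpow_nonneg (ha0 k) r)) hM hr]
  exact hsum_le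

theorem Lq_subset_K2_general {X : Type*} [MeasurableSpace X] (μ : Measure X)
    (E : ℕ → X → ℝ)
    (hE0 : ∀ k x, 0 ≤ E k x) (hE1 : ∀ k x, E k x ≤ 1)
    (hEint : ∀ k, Integrable (E k) μ)
    (hEle : ∀ k, ∫ x, E k x ∂μ ≤ 1)
    (t : ℕ → ℝ) (ht0 : ∀ k, 0 ≤ t k) (htsum : ∑' k, t k = 1)
    (q : ℝ) (hq : 1 ≤ q)
    (f : X → ℝ) (hf : MemLp f (ENNReal.ofReal q) μ) :
    (∑' k, t k * |∫ x, E k x * f x ∂μ| ^ (2 : ℝ)) ^ ((1 : ℝ) / 2)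
      ≤ (eLpNorm f (ENNReal.ofReal q) μ).toReal := by
  set p := (ENNReal.ofReal q).conjExponent
  have : p.HolderConjugate (ENNReal.ofReal q) :=
    (ENNReal.HolderConjugate.conjExponent (ENNReal.one_le_ofReal.mpr hq)).symm
  have hE_norm : ∀ k, eLpNorm (E k) p μ ≤ 1 := fun k =>
    eLpNorm_le_one_of_integral_le_one (ENNReal.HolderConjugate.one_le p (ENNReal.ofReal q))
      (.of_forall (hE0 k)) (.of_forall (hE1 k)) (hEint k) (hEle k)
  have hbound : ∀ k, |∫ x, E k x * f x ∂μ| ≤ (eLpNorm f (ENNReal.ofReal q) μ).toReal := by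
    intro k
    rw [← Real.norm_eq_abs, ← toReal_enorm]
    refine ENNReal.toReal_mono hf.eLpNorm_ne_top ?_
    calc ‖∫ x, E k x * f x ∂μ‖ₑ
        ≤ eLpNorm (E k) p μ * eLpNorm f (ENNReal.ofReal q) μ :=
          enorm_integral_mul_le_eLpNorm_mul_eLpNorm (hEint k).1 hf.1
      _ ≤ eLpNorm f (ENNReal.ofReal q) μ := mul_le_of_le_one_left (by positivity) (hE_norm k)
  exact tsum_mul_rpow_one_div_le ht0 htsum (fun k => abs_nonneg _) hbound two_pos

/-- **Theorem 2.5.** Under the Kuelbs–Steadman hypotheses on `(𝓔ₖ)` and `(tₖ)`,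
every `f ∈ L^q(μ)` (`1 ≤ q < ∞`) satisfies the `K²` bound
`(∑ₖ tₖ |∫ 𝓔ₖ f dμ|²)^{1/2} ≤ ‖f‖_{L^q(μ)}`; in particular `L^q(μ)` embeds
continuously into the Kuelbs–Steadman space `K²`. -/
theorem Lq_subset_K2 {X : Type*} [MeasurableSpace X] (μ : Measure X)
    (E : ℕ → X → ℝ) (hEmeas : ∀ k, Measurable (E k))
    (hE0 : ∀ k x, 0 ≤ E k x) (hE1 : ∀ k x, E k x ≤ 1)
    (hEint : ∀ k, Integrable (E k) μ)
    (hEle : ∀ k, ∫ x, E k x ∂μ ≤ 1)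
    (t : ℕ → ℝ) (ht0 : ∀ k, 0 ≤ t k) (htsum : ∑' k, t k = 1)
    (q : ℝ) (hq : 1 ≤ q)
    (f : X → ℝ) (hf : MemLp f (ENNReal.ofReal q) μ) :
    (∑' k, t k * |∫ x, E k x * f x ∂μ| ^ (2 : ℝ)) ^ ((1 : ℝ) / 2)
      ≤ (eLpNorm f (ENNReal.ofReal q) μ).toReal :=
  Lq_subset_K2_general μ E hE0 hE1 hEint hEle t ht0 htsum q hq f hf
end

section
/- With 1 ≤ p < ∞ and 1 ≤ q < ∞, under the stated hypotheses on (𝓔_k) and (t_k), every f ∈ L^q(μ) satisfies ‖f‖_{K^p} = (∑_{k=1}^∞ t_k |∫_X 𝓔_k f dμ|^p)^{1/p} ≤ ‖f‖_{L^q(μ)}. In particular every L^q space embeds continuously (with norm of the embedding at most 1) into the K^p space (Theorem 2.7). -/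
/-!
Each `𝓔ₖ` is the density of a measure `νₖ = 𝓔ₖ μ` with `νₖ ≤ μ` (as `𝓔ₖ ≤ 1`) and total
mass at most `1` (as `∫ 𝓔ₖ dμ ≤ 1`). Hence
`|∫ 𝓔ₖ f dμ| ≤ ‖f‖_{L¹(νₖ)} ≤ ‖f‖_{L^q(νₖ)} ≤ ‖f‖_{L^q(μ)}`,
and a `t`-weighted `p`-mean of numbers bounded by `‖f‖_{L^q(μ)}` is again bounded by it.
-/

open MeasureTheory

theorem tsum_mul_rpow_rpow_one_div_le {ι : Type*} {t a : ι → ℝ} {C p : ℝ}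
    (ht0 : ∀ i, 0 ≤ t i) (ht : ∑' i, t i = 1) (ha0 : ∀ i, 0 ≤ a i) (haC : ∀ i, a i ≤ C)
    (hC : 0 ≤ C) (hp : 0 < p) :
    (∑' i, t i * a i ^ p) ^ (1 / p) ≤ C := by
  have ht_summable : Summable t := by
    by_contra h
    simp [tsum_eq_zero_of_not_summable h] at ht
  have hterm : ∀ i, t i * a i ^ p ≤ t i * C ^ p := fun i =>
    mul_le_mul_of_nonneg_left (Real.rpow_le_rpow (ha0 i) (haC i) hp.le) (ht0 i)
  have hterm0 : ∀ i, 0 ≤ t i * a i ^ p := fun i =>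
    mul_nonneg (ht0 i) (Real.rpow_nonneg (ha0 i) p)
  have hbound_summable : Summable fun i => t i * C ^ p := ht_summable.mul_right _
  have hsum : ∑' i, t i * a i ^ p ≤ C ^ p :=
    calc ∑' i, t i * a i ^ p ≤ ∑' i, t i * C ^ p :=
          Summable.tsum_le_tsum hterm (.of_nonneg_of_le hterm0 hterm hbound_summable)
            hbound_summable
      _ = C ^ p := by rw [tsum_mul_right, ht, one_mul]
  rwa [one_div, Real.rpow_inv_le_iff_of_pos (tsum_nonneg hterm0) hC hp]

section SubprobabilityDensity

variable {X : Type*} [MeasurableSpace X] {μ : Measure X}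

theorem withDensity_le_self {g : X → ENNReal} (hg : ∀ᵐ x ∂μ, g x ≤ 1) : μ.withDensity g ≤ μ :=
  (withDensity_mono hg).trans_eq withDensity_one

theorem enorm_integral_mul_le_eLpNorm {g f : X → ℝ} (hg : Measurable g) (hg0 : ∀ x, 0 ≤ g x)
    (hg1 : ∀ x, g x ≤ 1) (hgμ : ∫⁻ x, ENNReal.ofReal (g x) ∂μ ≤ 1)
    (hf : AEStronglyMeasurable f μ) {q : ENNReal} (hq : 1 ≤ q) :
    ‖∫ x, g x * f x ∂μ‖ₑ ≤ eLpNorm f q μ := by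
  set ν := μ.withDensity fun x => ENNReal.ofReal (g x)
  have hνμ : ν ≤ μ := withDensity_le_self (ae_of_all _ fun x => ENNReal.ofReal_le_one.2 (hg1 x))
  have hν_univ : ν Set.univ ≤ 1 := by
    rwa [withDensity_apply _ MeasurableSet.univ, Measure.restrict_univ]
  have hexp : 0 ≤ 1 / (1 : ENNReal).toReal - 1 / q.toReal := by
    rcases eq_or_ne q ⊤ with rfl | hq_top
    · simp
    · have : 1 ≤ q.toReal := by simpa using ENNReal.toReal_mono hq_top hq
      simpa using inv_le_one_of_one_le₀ this
  calc ‖∫ x, g x * f x ∂μ‖ₑ ≤ ∫⁻ x, ‖g x * f x‖ₑ ∂μ := enorm_integral_le_lintegral_enorm _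
    _ = eLpNorm f 1 ν := by
        rw [eLpNorm_one_eq_lintegral_enorm, lintegral_withDensity_eq_lintegral_mul_non_measurable _
          hg.ennreal_ofReal (ae_of_all _ fun _ => ENNReal.ofReal_lt_top)]
        simp only [enorm_mul, Real.enorm_of_nonneg (hg0 _), Pi.mul_apply]
    _ ≤ eLpNorm f q ν * ν Set.univ ^ (1 / (1 : ENNReal).toReal - 1 / q.toReal) :=
        eLpNorm_le_eLpNorm_mul_rpow_measure_univ hq (hf.mono_measure hνμ)
    _ ≤ eLpNorm f q μ * 1 :=
        mul_le_mul' (eLpNorm_mono_measure f hνμ) (ENNReal.rpow_le_one hν_univ hexp)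
    _ = eLpNorm f q μ := mul_one _

theorem abs_integral_mul_le_eLpNorm_toReal {g f : X → ℝ} (hg : Measurable g)
    (hg0 : ∀ x, 0 ≤ g x) (hg1 : ∀ x, g x ≤ 1) (hg_int : Integrable g μ) (hgμ : ∫ x, g x ∂μ ≤ 1)
    {q : ENNReal} (hq : 1 ≤ q) (hf : MemLp f q μ) :
    |∫ x, g x * f x ∂μ| ≤ (eLpNorm f q μ).toReal := by
  have hgμ' : ∫⁻ x, ENNReal.ofReal (g x) ∂μ ≤ 1 := by
    rw [← ofReal_integral_eq_lintegral_ofReal hg_int (ae_of_all _ hg0)]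
    exact ENNReal.ofReal_le_one.2 hgμ
  rw [← Real.norm_eq_abs, ← toReal_enorm]
  exact ENNReal.toReal_mono hf.eLpNorm_ne_top
    (enorm_integral_mul_le_eLpNorm hg hg0 hg1 hgμ' hf.1 hq)

end SubprobabilityDensity

/-- **Theorem 2.7.** Under the Kuelbs–Steadman hypotheses on `(𝓔ₖ)` and `(tₖ)`,
for `1 ≤ p < ∞` and `1 ≤ q < ∞`, every `f ∈ L^q(μ)` satisfies
`‖f‖_{K^p} = (∑ₖ tₖ |∫ 𝓔ₖ f dμ|^p)^{1/p} ≤ ‖f‖_{L^q(μ)}`; in particular every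
`L^q` space embeds continuously (with embedding norm at most 1) into `K^p`. -/
theorem Lq_subset_Kp {X : Type*} [MeasurableSpace X] (μ : Measure X)
    (E : ℕ → X → ℝ) (hEmeas : ∀ k, Measurable (E k))
    (hE0 : ∀ k x, 0 ≤ E k x) (hE1 : ∀ k x, E k x ≤ 1)
    (hEint : ∀ k, Integrable (E k) μ)
    (hEle : ∀ k, ∫ x, E k x ∂μ ≤ 1)
    (t : ℕ → ℝ) (ht0 : ∀ k, 0 ≤ t k) (htsum : ∑' k, t k = 1)
    (p q : ℝ) (hp : 1 ≤ p) (hq : 1 ≤ q)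
    (f : X → ℝ) (hf : MemLp f (ENNReal.ofReal q) μ) :
    (∑' k, t k * |∫ x, E k x * f x ∂μ| ^ p) ^ ((1 : ℝ) / p)
      ≤ (eLpNorm f (ENNReal.ofReal q) μ).toReal :=
  tsum_mul_rpow_rpow_one_div_le ht0 htsum (fun _ => abs_nonneg _)
    (fun k => abs_integral_mul_le_eLpNorm_toReal (hEmeas k) (hE0 k) (hE1 k) (hEint k) (hEle k)
      (ENNReal.one_le_ofReal.2 hq) hf)
    ENNReal.toReal_nonneg (zero_lt_one.trans_le hp)
end

section
/- The smooth compactly supported functions are dense in K^p for 1 ≤ p < ∞: let μ be Lebesgue measure on ℝⁿ. For every integrable f : ℝⁿ → ℝ and every ε > 0 there exists an infinitely differentiable function g : ℝⁿ → ℝ with compact support such that ‖f − g‖_{K^p} = (∑_{k=1}^∞ t_k |∫_{ℝⁿ} 𝓔_k (f − g) dμ|^p)^{1/p} < ε (Theorem 2.14 and Corollary 2.15). -/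
/-!
Since `|𝓔ₖ| ≤ 1`, every `|∫ 𝓔ₖ h dμ|` is at most `‖h‖₁`, and `‖h‖_{K^p}` is a power mean of these
numbers with weights `tₖ` summing to one, so `‖h‖_{K^p} ≤ ‖h‖₁`. The theorem then follows from
the density of smooth compactly supported functions in `L¹`.
-/

open MeasureTheory

section KuelbsSteadman

variable {α ι : Type*} [MeasurableSpace α]

noncomputable def kuelbsSteadmanNorm (μ : Measure α) (E : ι → α → ℝ) (t : ι → ℝ) (p : ℝ)
    (h : α → ℝ) : ℝ :=
  (∑' k, t k * |∫ x, E k x * h x ∂μ| ^ p) ^ (1 / p)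

theorem enorm_integral_mul_le_eLpNorm_one {μ : Measure α} {e h : α → ℝ}
    (he : ∀ x, |e x| ≤ 1) : ‖∫ x, e x * h x ∂μ‖ₑ ≤ eLpNorm h 1 μ := by
  rw [eLpNorm_one_eq_lintegral_enorm]
  refine (enorm_integral_le_lintegral_enorm _).trans (lintegral_mono fun x => ?_)
  rw [enorm_mul]
  refine mul_le_of_le_one_left' ?_
  rw [← ofReal_norm, Real.norm_eq_abs]
  exact ENNReal.ofReal_le_one.2 (he x)

theorem tsum_mul_abs_rpow_rpow_one_div_le {t a : ι → ℝ} {p c : ℝ} (ht0 : ∀ k, 0 ≤ t k)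
    (htsum : ∑' k, t k = 1) (hp : 0 < p) (hc : 0 ≤ c) (ha : ∀ k, |a k| ≤ c) :
    (∑' k, t k * |a k| ^ p) ^ (1 / p) ≤ c := by
  have ht : Summable t := by
    by_contra h
    simp [tsum_eq_zero_of_not_summable h] at htsum
  have hterm : ∀ k, t k * |a k| ^ p ≤ t k * c ^ p := fun k =>
    mul_le_mul_of_nonneg_left (Real.rpow_le_rpow (abs_nonneg _) (ha k) hp.le) (ht0 k)
  have hnonneg : ∀ k, 0 ≤ t k * |a k| ^ p := fun k =>
    mul_nonneg (ht0 k) (Real.rpow_nonneg (abs_nonneg _) _)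
  have hsum : ∑' k, t k * |a k| ^ p ≤ c ^ p :=
    calc ∑' k, t k * |a k| ^ p ≤ ∑' k, t k * c ^ p :=
          Summable.tsum_le_tsum hterm ((ht.mul_right _).of_nonneg_of_le hnonneg hterm)
            (ht.mul_right _)
      _ = c ^ p := by rw [tsum_mul_right, htsum, one_mul]
  rw [one_div]
  exact (Real.rpow_inv_le_iff_of_pos (tsum_nonneg hnonneg) hc hp).2 hsum

theorem kuelbsSteadmanNorm_le_of_eLpNorm_one_le {μ : Measure α} {E : ι → α → ℝ} {t : ι → ℝ}
    {p c : ℝ} {h : α → ℝ} (hE : ∀ k x, |E k x| ≤ 1) (ht0 : ∀ k, 0 ≤ t k)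
    (htsum : ∑' k, t k = 1) (hp : 0 < p) (hc : 0 ≤ c) (hh : eLpNorm h 1 μ ≤ ENNReal.ofReal c) :
    kuelbsSteadmanNorm μ E t p h ≤ c :=
  tsum_mul_abs_rpow_rpow_one_div_le ht0 htsum hp hc fun k => by
    rw [← Real.norm_eq_abs, ← ENNReal.ofReal_le_ofReal_iff hc, ofReal_norm]
    exact (enorm_integral_mul_le_eLpNorm_one (hE k)).trans hh

end KuelbsSteadman

theorem smooth_Cc_dense_in_Kp_general (n : ℕ)
    (E : ℕ → (Fin n → ℝ) → ℝ)
    (hE1 : ∀ k x, |E k x| ≤ 1)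
    (t : ℕ → ℝ) (ht0 : ∀ k, 0 ≤ t k) (htsum : ∑' k, t k = 1)
    (p : ℝ) (hp : 1 ≤ p)
    (f : (Fin n → ℝ) → ℝ) (hf : Integrable f volume)
    (ε : ℝ) (hε : 0 < ε) :
    ∃ g : (Fin n → ℝ) → ℝ, ContDiff ℝ (⊤ : ℕ∞) g ∧ HasCompactSupport g ∧
      (∑' k, t k * |∫ x, E k x * (f x - g x)| ^ p) ^ ((1 : ℝ) / p) < ε := by
  obtain ⟨g, hg_supp, hg_smooth, hfg⟩ := (memLp_one_iff_integrable.2 hf).exist_eLpNorm_sub_le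
    ENNReal.one_ne_top le_rfl (half_pos hε)
  refine ⟨g, hg_smooth, hg_supp, ?_⟩
  calc kuelbsSteadmanNorm volume E t p (f - g)
      ≤ ε / 2 := kuelbsSteadmanNorm_le_of_eLpNorm_one_le hE1 ht0 htsum (by linarith)
        (half_pos hε).le hfg
    _ < ε := half_lt_self hε

/-- **Theorem 2.14 / Corollary 2.15.** The smooth compactly supported functions
are dense in `K^p` for `1 ≤ p < ∞`: with `μ` Lebesgue measure on `ℝⁿ`, for
every integrable `f : ℝⁿ → ℝ` and every `ε > 0` there is a `C^∞` compactly
supported `g : ℝⁿ → ℝ` with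
`‖f − g‖_{K^p} = (∑ₖ tₖ |∫ 𝓔ₖ (f − g) dμ|^p)^{1/p} < ε`. -/
theorem smooth_Cc_dense_in_Kp (n : ℕ)
    (E : ℕ → (Fin n → ℝ) → ℝ) (hEmeas : ∀ k, Measurable (E k))
    (hE1 : ∀ k x, |E k x| ≤ 1)
    (t : ℕ → ℝ) (ht0 : ∀ k, 0 ≤ t k) (htsum : ∑' k, t k = 1)
    (p : ℝ) (hp : 1 ≤ p)
    (f : (Fin n → ℝ) → ℝ) (hf : Integrable f volume)
    (ε : ℝ) (hε : 0 < ε) :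
    ∃ g : (Fin n → ℝ) → ℝ, ContDiff ℝ (⊤ : ℕ∞) g ∧ HasCompactSupport g ∧
      (∑' k, t k * |∫ x, E k x * (f x - g x)| ^ p) ^ ((1 : ℝ) / p) < ε :=
  smooth_Cc_dense_in_Kp_general n E hE1 t ht0 htsum p hp f hf ε hε
end
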